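/- Let P be the orthogonal projection in L²(S¹) onto the closed span of {e^{2πint} : n ≥ 1} (the positive Fourier modes). For f ∈ C^∞(S¹) acting as a multiplication operator, the commutator [P, f] is a trace-class operator (indeed its matrix coefficients decay rapidly). -/

import Mathlib

/-
Integration by parts against a periodic function shows that each derivative multiplies the
`n`-th Fourier coefficient by `2πin/(b-a)`, so for smooth `f` the quantity `|k|⁴ ‖f̂(k)‖` is
bounded. The entry of `[P, f]` at `(m, n)` vanishes unless `m` and `n` lie on opposite sides
of `0`, and then `|n - m| = |m| + |n|`, whence `(1 + |m|)² (1 + |n|)² ≤ 16 (n - m)⁴`. The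
entries are therefore dominated by a multiple of the summable `(1 + |m|)⁻² (1 + |n|)⁻²`.
-/

/-- The `k`-th Fourier coefficient of a `1`-periodic function `f : ℝ → ℂ`. -/
noncomputable def fourierC (f : ℝ → ℂ) (k : ℤ) : ℂ :=
  ∫ t in (0:ℝ)..1, f t * Complex.exp (-2 * Real.pi * Complex.I * k * t)

open Complex Real

theorem Function.Periodic.deriv {𝕜 F : Type*} [NontriviallyNormedField 𝕜]
    [NormedAddCommGroup F] [NormedSpace 𝕜 F] {g : 𝕜 → F} {c : 𝕜} (hg : Function.Periodic g c) :
    Function.Periodic (deriv g) c := fun x => by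
  rw [← deriv_comp_add_const]
  exact congrArg (fun h => _root_.deriv h x) (funext hg)

section FourierCoeffOn

variable {a b : ℝ} (hab : a < b)

theorem fourierCoeffOn_deriv_of_periodic {g : ℝ → ℂ} (hg : ContDiff ℝ 1 g)
    (hper : Function.Periodic g (b - a)) {n : ℤ} (hn : n ≠ 0) :
    fourierCoeffOn hab (deriv g) n = 2 * π * I * n / (b - a) * fourierCoeffOn hab g n := by
  rw [fourierCoeffOn_of_hasDerivAt hab hn
    (fun x _ => ((hg.differentiable one_ne_zero) x).hasDerivAt)
    ((hg.continuous_deriv le_rfl).intervalIntegrable a b)]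
  have hba : g b = g a := by simpa using hper a
  have hab' : (b : ℂ) - a ≠ 0 := by exact_mod_cast (sub_pos.mpr hab).ne'
  rw [hba, sub_self, mul_zero, zero_sub]
  field_simp

theorem fourierCoeffOn_iteratedDeriv_of_periodic {g : ℝ → ℂ} {N : ℕ} (hg : ContDiff ℝ N g)
    (hper : Function.Periodic g (b - a)) {n : ℤ} (hn : n ≠ 0) :
    fourierCoeffOn hab (iteratedDeriv N g) n =
      (2 * π * I * n / (b - a)) ^ N * fourierCoeffOn hab g n := by
  induction N generalizing g with
  | zero => simp
  | succ N ih =>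
    have hg' : ContDiff ℝ N (deriv g) := (contDiff_succ_iff_deriv.mp hg).2.2
    have hg1 : ContDiff ℝ 1 g := hg.of_le (by exact_mod_cast Nat.le_add_left 1 N)
    rw [iteratedDeriv_succ', ih hg' hper.deriv,
      fourierCoeffOn_deriv_of_periodic hab hg1 hper hn]
    ring

theorem norm_fourierCoeffOn_le {g : ℝ → ℂ} {C : ℝ} (hC : ∀ x ∈ Set.Icc a b, ‖g x‖ ≤ C)
    (n : ℤ) : ‖fourierCoeffOn hab g n‖ ≤ C := by
  have hba : 0 < b - a := sub_pos.mpr hab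
  rw [fourierCoeffOn_eq_integral, norm_smul, Real.norm_of_nonneg (by positivity)]
  refine (mul_le_mul_of_nonneg_left
    (intervalIntegral.norm_integral_le_of_norm_le_const (C := C) fun x hx => ?_)
    (by positivity)).trans_eq ?_
  · rw [Set.uIoc_of_le hab.le] at hx
    rw [norm_smul, fourier_apply, Circle.norm_coe, one_mul]
    exact hC x (Set.Ioc_subset_Icc_self hx)
  · rw [abs_of_pos hba]
    field_simp

theorem fourierCoeffOn_rapid_decay {g : ℝ → ℂ} {N : ℕ} (hg : ContDiff ℝ N g)
    (hper : Function.Periodic g (b - a)) :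
    ∃ C, ∀ n : ℤ, n ≠ 0 → |(n : ℝ)| ^ N * ‖fourierCoeffOn hab g n‖ ≤ C := by
  obtain ⟨M, hM⟩ := isCompact_Icc.exists_bound_of_continuousOn
    (hg.continuous_iteratedDeriv N le_rfl).continuousOn (s := Set.Icc a b)
  refine ⟨((b - a) / (2 * π)) ^ N * M, fun n hn => ?_⟩
  have hbound := norm_fourierCoeffOn_le hab hM n
  rw [fourierCoeffOn_iteratedDeriv_of_periodic hab hg hper hn, norm_mul, norm_pow] at hbound
  have hba : 0 < b - a := sub_pos.mpr hab
  have hnorm : ‖2 * π * I * n / (b - a)‖ = 2 * π / (b - a) * |(n : ℝ)| := by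
    rw [← ofReal_sub, norm_div, norm_mul, norm_mul, norm_mul, norm_I, norm_real, norm_real,
      Real.norm_of_nonneg hba.le, Real.norm_of_nonneg pi_pos.le, norm_intCast,
      Complex.norm_ofNat]
    ring
  rw [hnorm] at hbound
  calc |(n : ℝ)| ^ N * ‖fourierCoeffOn hab g n‖
      = ((b - a) / (2 * π)) ^ N *
          ((2 * π / (b - a) * |(n : ℝ)|) ^ N * ‖fourierCoeffOn hab g n‖) := by
        rw [← mul_assoc, ← mul_pow]
        field_simp
    _ ≤ ((b - a) / (2 * π)) ^ N * M := by gcongr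

end FourierCoeffOn

theorem summable_inv_one_add_abs_sq : Summable fun m : ℤ => (((1 : ℝ) + |(m : ℝ)|) ^ 2)⁻¹ := by
  have hnat : Summable fun n : ℕ => (((1 : ℝ) + n) ^ 2)⁻¹ := by
    have := (summable_nat_add_iff 1).mpr (Real.summable_nat_pow_inv.mpr one_lt_two)
    simpa [add_comm] using this
  exact .of_nat_of_neg (by simpa using hnat) (by simpa using hnat)

theorem one_add_abs_mul_one_add_abs_le {m n : ℤ} (h : ¬(1 ≤ n ↔ 1 ≤ m)) :
    (1 + |m|) * (1 + |n|) ≤ 4 * (n - m) ^ 2 := by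
  rcases le_or_gt 1 n with hn | hn <;> rcases le_or_gt 1 m with hm | hm
  · exact absurd (iff_of_true hn hm) h
  · rw [abs_of_nonpos (by omega : m ≤ 0), abs_of_pos (by omega : 0 < n)]
    nlinarith
  · rw [abs_of_pos (by omega : 0 < m), abs_of_nonpos (by omega : n ≤ 0)]
    nlinarith
  · exact absurd (iff_of_false (by omega) (by omega)) h

theorem norm_indicator_mul_sub_mul_indicator (x : ℂ) (m n : ℤ) :
    ‖(if 1 ≤ n then (1 : ℂ) else 0) * x - x * (if 1 ≤ m then (1 : ℂ) else 0)‖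
      = if (1 ≤ n ↔ 1 ≤ m) then 0 else ‖x‖ := by
  by_cases hn : 1 ≤ n <;> by_cases hm : 1 ≤ m <;> simp [hn, hm]

theorem summable_norm_indicator_commutator {a : ℤ → ℂ} {C : ℝ}
    (ha : ∀ k : ℤ, k ≠ 0 → |(k : ℝ)| ^ 4 * ‖a k‖ ≤ C) :
    Summable fun p : ℤ × ℤ =>
      ‖(if 1 ≤ p.2 then (1 : ℂ) else 0) * a (p.2 - p.1)
        - a (p.2 - p.1) * (if 1 ≤ p.1 then (1 : ℂ) else 0)‖ := by
  have hC : 0 ≤ C := (mul_nonneg (by positivity) (norm_nonneg _)).trans (ha 1 one_ne_zero)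
  have hprod := (summable_inv_one_add_abs_sq.mul_of_nonneg summable_inv_one_add_abs_sq
    (fun _ => by positivity) (fun _ => by positivity)).mul_left (16 * C)
  refine .of_nonneg_of_le (fun _ => norm_nonneg _) (fun ⟨m, n⟩ => ?_) hprod
  rw [norm_indicator_mul_sub_mul_indicator]
  split_ifs with hmn
  · positivity
  have hk : ((1 + |(m : ℝ)|) * (1 + |(n : ℝ)|)) ^ 2 ≤ 16 * |(n : ℝ) - m| ^ 4 := by
    have key : (1 + |(m : ℝ)|) * (1 + |(n : ℝ)|) ≤ 4 * ((n : ℝ) - m) ^ 2 := by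
      exact_mod_cast one_add_abs_mul_one_add_abs_le hmn
    calc ((1 + |(m : ℝ)|) * (1 + |(n : ℝ)|)) ^ 2
        ≤ (4 * ((n : ℝ) - m) ^ 2) ^ 2 := by gcongr
      _ = 16 * |(n : ℝ) - m| ^ 4 := by rw [Even.pow_abs (by decide)]; ring
  have hdecay := ha (n - m) (by omega)
  push_cast at hdecay
  rw [← mul_inv, ← mul_pow, ← div_eq_mul_inv, le_div_iff₀ (by positivity)]
  calc ‖a (n - m)‖ * ((1 + |(m : ℝ)|) * (1 + |(n : ℝ)|)) ^ 2
      ≤ ‖a (n - m)‖ * (16 * |(n : ℝ) - m| ^ 4) := by gcongr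
    _ ≤ 16 * C := by linarith

theorem fourierC_eq_fourierCoeffOn (f : ℝ → ℂ) : fourierC f = fourierCoeffOn zero_lt_one f := by
  ext k
  rw [fourierCoeffOn_eq_integral]
  simp only [sub_zero, div_one, one_smul, smul_eq_mul, fourier_coe_apply, fourierC]
  congr 1 with t
  rw [mul_comm]
  congr 2
  push_cast
  ring

theorem stmt_10 (f : ℝ → ℂ) (hf : ContDiff ℝ (⊤ : ℕ∞) f)
    (hper : Function.Periodic f 1) :
    Summable (fun p : ℤ × ℤ =>
      ‖(if 1 ≤ p.2 then (1 : ℂ) else 0) * fourierC f (p.2 - p.1)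
        - fourierC f (p.2 - p.1) * (if 1 ≤ p.1 then (1 : ℂ) else 0)‖) := by
  obtain ⟨C, hdecay⟩ := fourierCoeffOn_rapid_decay zero_lt_one (N := 4)
    (hf.of_le (WithTop.coe_le_coe.mpr le_top)) (by rwa [sub_zero])
  rw [fourierC_eq_fourierCoeffOn]
  exact summable_norm_indicator_commutator hdecay
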